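/- arXiv:1409.3776 — 3 statements merged into one kernel-verified Lean document; each statement's English description precedes it below -/
import Mathlib

section
/- For z in the sector 0 ≤ arg z ≤ π/2, the function F(z) = e^{-iz²} Fr(z) satisfies |F(z)| ≤ 1/2. -/
noncomputable def cerf (z : ℂ) : ℂ :=
  2 / Real.sqrt Real.pi * ∫ t in (0:ℝ)..1, z * Complex.exp (-((t : ℂ) * z) ^ 2)

/-- The Fresnel integral `Fr(z) = (1/2) erfc(e^{-iπ/4} z)`. -/
noncomputable def Fr (z : ℂ) : ℂ :=
  (1 - cerf (Complex.exp (-(Real.pi / 4 : ℂ) * Complex.I) * z)) / 2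

/-- `F(z) = e^{-iz²} Fr(z)`. -/
noncomputable def Ffun (z : ℂ) : ℂ := Complex.exp (-Complex.I * z ^ 2) * Fr z


/-!
Put `w = e^{-iπ/4} z`, so that `w² = -iz²`, `Re w ≥ 0` and `F(z) = e^{w²} (1 - cerf w) / 2`.
If `G` is an entire primitive of `e^{-s²}` (Morera), then `cerf w = (2/√π) (G w - G 0)`, while
`G (u + w) - G u → 0` and `G u → G 0 + √π/2` as `u → +∞`, so that
`1 - cerf w = (2/√π) ∫₀^∞ e^{-(u+w)²} du`.
Hence `e^{w²} (1 - cerf w) = (2/√π) ∫₀^∞ e^{-u² - 2uw} du`, and for `Re w ≥ 0` its modulus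
is at most `(2/√π) ∫₀^∞ e^{-u²} du = 1`.
-/

open MeasureTheory Set Filter Topology Real

lemma norm_cexp_neg_sq_ofReal_add_le (u : ℝ) (z : ℂ) :
    ‖Complex.exp (-((u : ℂ) + z) ^ 2)‖ ≤ Real.exp (‖z‖ ^ 2) * Real.exp (-(1 / 2) * u ^ 2) := by
  rw [Complex.norm_exp, ← Real.exp_add, Real.exp_le_exp, Complex.sq_norm, Complex.normSq_apply]
  have : (-((u : ℂ) + z) ^ 2).re = z.im ^ 2 - (u + z.re) ^ 2 := by
    simp only [sq, Complex.neg_re, Complex.mul_re, Complex.add_re, Complex.add_im,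
      Complex.ofReal_re, Complex.ofReal_im]
    ring
  rw [this]
  nlinarith [sq_nonneg (u + 2 * z.re)]

lemma integrable_cexp_neg_sq_ofReal_add (z : ℂ) :
    Integrable fun u : ℝ => Complex.exp (-((u : ℂ) + z) ^ 2) :=
  ((integrable_exp_neg_mul_sq (by norm_num : (0 : ℝ) < 1 / 2)).const_mul _).mono'
    (by fun_prop) (.of_forall fun u => norm_cexp_neg_sq_ofReal_add_le u z)

lemma intervalIntegral_mul_comp_add_mul {g G : ℂ → ℂ} (hG : ∀ s, HasDerivAt G (g s) s)
    (hg : Continuous g) (a z : ℂ) :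
    ∫ t in (0 : ℝ)..1, z * g (a + t * z) = G (a + z) - G a := by
  have hderiv (t : ℝ) : HasDerivAt (fun t : ℝ => G (a + t * z)) (z * g (a + t * z)) t := by
    have := (hG (a + t * z)).comp (t : ℂ) (((hasDerivAt_id _).mul_const z).const_add a)
    simpa [mul_comm] using this.comp_ofReal
  rw [intervalIntegral.integral_eq_sub_of_hasDerivAt (fun t _ => hderiv t)
    (by apply Continuous.intervalIntegrable; fun_prop)]
  simp

section Primitive

variable {G : ℂ → ℂ} (hG : ∀ s, HasDerivAt G (Complex.exp (-s ^ 2)) s)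
include hG

lemma cerf_eq_two_div_sqrt_pi_mul_sub (z : ℂ) : cerf z = 2 / (√π : ℂ) * (G z - G 0) := by
  have h := intervalIntegral_mul_comp_add_mul hG (by fun_prop) 0 z
  simp only [zero_add] at h
  rw [cerf, h]

lemma tendsto_primitive_cexp_neg_sq_add_sub (w : ℂ) :
    Tendsto (fun u : ℝ => G (u + w) - G u) atTop (𝓝 0) := by
  have hbound (u : ℝ) : ‖G (u + w) - G u‖ ≤
      ‖w‖ * Real.exp (‖w‖ ^ 2) * Real.exp (-(1 / 2) * u ^ 2) := by
    rw [← intervalIntegral_mul_comp_add_mul hG (by fun_prop)]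
    refine (intervalIntegral.norm_integral_le_of_norm_le_const (C := ‖w‖ * Real.exp (‖w‖ ^ 2) *
      Real.exp (-(1 / 2) * u ^ 2)) fun t ht => ?_).trans_eq (by simp)
    have ht : t ∈ Icc (0 : ℝ) 1 := by simpa using Ioc_subset_Icc_self ht
    rw [norm_mul, mul_assoc]
    refine mul_le_mul_of_nonneg_left ((norm_cexp_neg_sq_ofReal_add_le u _).trans ?_) (norm_nonneg w)
    gcongr
    simpa [norm_mul, abs_of_nonneg ht.1] using mul_le_of_le_one_left (norm_nonneg w) ht.2
  rw [tendsto_zero_iff_norm_tendsto_zero]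
  refine squeeze_zero (fun _ => norm_nonneg _) hbound ?_
  simpa using (Real.tendsto_exp_atBot.comp ((tendsto_pow_atTop two_ne_zero).const_mul_atTop_of_neg
    (by norm_num : -(1 / 2 : ℝ) < 0))).const_mul (‖w‖ * Real.exp (‖w‖ ^ 2))

lemma tendsto_primitive_cexp_neg_sq_ofReal :
    Tendsto (fun u : ℝ => G u) atTop (𝓝 (G 0 + (√π / 2 : ℝ))) := by
  have hint : IntegrableOn (fun s : ℝ => Complex.exp (-(s : ℂ) ^ 2)) (Ioi 0) := by
    simpa using (integrable_cexp_neg_sq_ofReal_add 0).integrableOn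
  have hval : ∫ s in Ioi (0 : ℝ), Complex.exp (-(s : ℂ) ^ 2) = (√π / 2 : ℝ) := by
    simp_rw [← Complex.ofReal_pow, ← Complex.ofReal_neg, ← Complex.ofReal_exp]
    rw [integral_complex_ofReal]
    simpa using congrArg ((↑) : ℝ → ℂ) (integral_gaussian_Ioi 1)
  have hFTC (u : ℝ) : G 0 + ∫ s in (0 : ℝ)..u, Complex.exp (-(s : ℂ) ^ 2) = G u := by
    rw [intervalIntegral.integral_eq_sub_of_hasDerivAt (fun s _ => (hG s).comp_ofReal)
      (by apply Continuous.intervalIntegrable; fun_prop)]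
    simp
  rw [← hval]
  exact (tendsto_const_nhds.add
    (intervalIntegral_tendsto_integral_Ioi 0 hint tendsto_id)).congr hFTC

lemma integral_Ioi_cexp_neg_sq_ofReal_add (w : ℂ) :
    ∫ u in Ioi (0 : ℝ), Complex.exp (-((u : ℂ) + w) ^ 2) = G 0 + (√π / 2 : ℝ) - G w := by
  have hlim : Tendsto (fun u : ℝ => G (u + w)) atTop (𝓝 (G 0 + (√π / 2 : ℝ))) := by
    simpa using (tendsto_primitive_cexp_neg_sq_add_sub hG w).add
      (tendsto_primitive_cexp_neg_sq_ofReal hG)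
  rw [integral_Ioi_of_hasDerivAt_of_tendsto' (fun u _ => (hG _).comp_add_const _ _ |>.comp_ofReal)
    (integrable_cexp_neg_sq_ofReal_add w).integrableOn hlim]
  simp

end Primitive

lemma one_sub_cerf_eq_integral_Ioi (w : ℂ) :
    1 - cerf w = 2 / (√π : ℂ) * ∫ u in Ioi (0 : ℝ), Complex.exp (-((u : ℂ) + w) ^ 2) := by
  obtain ⟨G, hG⟩ :=
    (show Differentiable ℂ fun s : ℂ => Complex.exp (-s ^ 2) by fun_prop).isExactOn_univ
  replace hG s : HasDerivAt G (Complex.exp (-s ^ 2)) s := hG s (mem_univ s)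
  have hpi : (√π : ℂ) ≠ 0 := Complex.ofReal_ne_zero.2 (Real.sqrt_pos.2 pi_pos).ne'
  rw [cerf_eq_two_div_sqrt_pi_mul_sub hG, integral_Ioi_cexp_neg_sq_ofReal_add hG]
  field_simp
  push_cast
  ring

lemma norm_cexp_sq_mul_one_sub_cerf_le_one {w : ℂ} (hw : 0 ≤ w.re) :
    ‖Complex.exp (w ^ 2) * (1 - cerf w)‖ ≤ 1 := by
  have hpointwise : ∀ᵐ u : ℝ ∂(volume.restrict (Ioi (0 : ℝ))),
      ‖Complex.exp (w ^ 2) * Complex.exp (-((u : ℂ) + w) ^ 2)‖ ≤ Real.exp (-1 * u ^ 2) := by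
    filter_upwards [ae_restrict_mem measurableSet_Ioi] with u (hu : 0 < u)
    rw [← Complex.exp_add, Complex.norm_exp, Real.exp_le_exp]
    have : (w ^ 2 + -((u : ℂ) + w) ^ 2).re = -1 * u ^ 2 - 2 * u * w.re := by
      simp only [sq, Complex.add_re, Complex.neg_re, Complex.mul_re, Complex.add_im,
        Complex.ofReal_re, Complex.ofReal_im]
      ring
    rw [this]
    nlinarith [mul_nonneg hu.le hw]
  have hsqrt : 0 < √π := Real.sqrt_pos.2 pi_pos
  calc ‖Complex.exp (w ^ 2) * (1 - cerf w)‖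
      = 2 / √π * ‖∫ u in Ioi (0 : ℝ), Complex.exp (w ^ 2) * Complex.exp (-((u : ℂ) + w) ^ 2)‖ := by
        rw [one_sub_cerf_eq_integral_Ioi, mul_left_comm, integral_const_mul, norm_mul,
          norm_div, Complex.norm_ofNat, Complex.norm_real, Real.norm_of_nonneg hsqrt.le]
    _ ≤ 2 / √π * ∫ u in Ioi (0 : ℝ), Real.exp (-1 * u ^ 2) := by
        gcongr
        exact norm_integral_le_of_norm_le (integrable_exp_neg_mul_sq one_pos).integrableOn
          hpointwise
    _ = 1 := by
        rw [integral_gaussian_Ioi, div_one]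
        field_simp

lemma cexp_neg_pi_div_four_mul_I_sq : Complex.exp (-(π / 4 : ℂ) * Complex.I) ^ 2 = -Complex.I := by
  rw [← Complex.exp_nat_mul, show ((2 : ℕ) : ℂ) * (-(π / 4 : ℂ) * Complex.I) =
    -(π / 2 * Complex.I) by push_cast; ring, Complex.exp_neg, Complex.exp_pi_div_two_mul_I,
    Complex.inv_I]

lemma Ffun_eq_cexp_sq_mul_one_sub_cerf (z : ℂ) :
    Ffun z = Complex.exp ((Complex.exp (-(π / 4 : ℂ) * Complex.I) * z) ^ 2) *
      (1 - cerf (Complex.exp (-(π / 4 : ℂ) * Complex.I) * z)) / 2 := by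
  rw [Ffun, Fr, mul_pow, cexp_neg_pi_div_four_mul_I_sq]
  ring

lemma re_cexp_neg_pi_div_four_mul_I_mul_nonneg {z : ℂ} (hre : 0 ≤ z.re) (him : 0 ≤ z.im) :
    0 ≤ (Complex.exp (-(π / 4 : ℂ) * Complex.I) * z).re := by
  rw [show -(π / 4 : ℂ) = ((-(π / 4) : ℝ) : ℂ) by push_cast; ring, Complex.mul_re,
    Complex.exp_ofReal_mul_I_re, Complex.exp_ofReal_mul_I_im, Real.cos_neg, Real.sin_neg,
    Real.cos_pi_div_four, Real.sin_pi_div_four]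
  have : 0 ≤ √2 / 2 := by positivity
  nlinarith [mul_nonneg this hre, mul_nonneg this him]

theorem F_bound_first_quadrant (z : ℂ) (h1 : 0 ≤ z.arg) (h2 : z.arg ≤ Real.pi / 2) :
    ‖Ffun z‖ ≤ 1 / 2 := by
  have him : 0 ≤ z.im := Complex.arg_nonneg_iff.1 h1
  have hre : 0 ≤ z.re := Complex.abs_arg_le_pi_div_two_iff.1 (by rwa [abs_of_nonneg h1])
  rw [Ffun_eq_cexp_sq_mul_one_sub_cerf, norm_div, Complex.norm_ofNat]
  gcongr
  exact norm_cexp_sq_mul_one_sub_cerf_le_one (re_cexp_neg_pi_div_four_mul_I_mul_nonneg hre him)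
end

section
/- The integral (1/π) ∫_0^∞ dt/√(t⁴+1) equals (4/π^{3/2}) Γ(5/4)². -/
/-!
Substituting `t = x ^ (1/4)` turns the integral into Euler's integral
`∫₀^∞ x^(a-1) (1 + x)^(-(a+b)) dx = Γ(a) Γ(b) / Γ(a+b)` with `a = b = 1/4`, which the substitution
`x = y / (1 - y)` reduces to the beta integral on `(0, 1)`. It remains to use `Γ(1/4) = 4 Γ(5/4)`
and `Γ(1/2) = √π`.
-/

open Real MeasureTheory Set

theorem integral_rpow_mul_one_sub_rpow {a b : ℝ} (ha : 0 < a) (hb : 0 < b) :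
    ∫ x in (0:ℝ)..1, x ^ (a - 1) * (1 - x) ^ (b - 1) = Gamma a * Gamma b / Gamma (a + b) := by
  have h := Complex.betaIntegral_eq_Gamma_mul_div a b (by simpa) (by simpa)
  have hcongr : EqOn (fun x : ℝ ↦ (x : ℂ) ^ ((a : ℂ) - 1) * (1 - (x : ℂ)) ^ ((b : ℂ) - 1))
      (fun x ↦ ((x ^ (a - 1) * (1 - x) ^ (b - 1) : ℝ) : ℂ)) (uIcc 0 1) := by
    intro x hx
    rw [uIcc_of_le zero_le_one] at hx
    push_cast
    rw [Complex.ofReal_cpow hx.1, Complex.ofReal_cpow (sub_nonneg.2 hx.2)]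
    push_cast
    ring
  rw [Complex.betaIntegral, intervalIntegral.integral_congr hcongr,
    intervalIntegral.integral_ofReal, ← Complex.ofReal_add, Complex.Gamma_ofReal,
    Complex.Gamma_ofReal, Complex.Gamma_ofReal] at h
  exact_mod_cast h

theorem integral_Ioi_rpow_mul_add_one_rpow {a b : ℝ} (ha : 0 < a) (hb : 0 < b) :
    ∫ x in Ioi 0, x ^ (a - 1) * (x + 1) ^ (-(a + b)) = Gamma a * Gamma b / Gamma (a + b) := by
  set f : ℝ → ℝ := fun y ↦ y / (1 - y)
  have hf_deriv : ∀ y ∈ Ioo (0:ℝ) 1, HasDerivWithinAt f ((1 - y) ^ 2)⁻¹ (Ioo 0 1) y := by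
    intro y hy
    have h1 : (1:ℝ) - y ≠ 0 := by linarith [hy.2]
    refine ((hasDerivAt_id y).div ((hasDerivAt_id y).const_sub 1) h1).hasDerivWithinAt
      |>.congr_deriv ?_
    simp only [id]
    field_simp
    ring
  have hf_inj : InjOn f (Ioo 0 1) := by
    intro y hy z hz hyz
    have h1 : (1:ℝ) - y ≠ 0 := by linarith [hy.2]
    have h2 : (1:ℝ) - z ≠ 0 := by linarith [hz.2]
    simp only [f] at hyz
    field_simp at hyz
    linarith
  have hf_image : f '' Ioo 0 1 = Ioi 0 := by
    refine (image_subset_iff.2 fun y hy ↦ div_pos hy.1 (sub_pos.2 hy.2)).antisymm fun x hx ↦ ?_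
    have hx : 0 < x := hx
    refine ⟨x / (x + 1), ⟨by positivity, (div_lt_one (by positivity)).2 (by linarith)⟩, ?_⟩
    simp only [f]
    field_simp
    ring
  rw [← hf_image, integral_image_eq_integral_abs_deriv_smul measurableSet_Ioo hf_deriv hf_inj,
    ← integral_rpow_mul_one_sub_rpow ha hb, intervalIntegral.integral_of_le zero_le_one,
    integral_Ioc_eq_integral_Ioo]
  refine setIntegral_congr_fun measurableSet_Ioo fun y ⟨hy, hy1⟩ ↦ ?_
  have hy1 : 0 < 1 - y := sub_pos.2 hy1
  have hf_add_one : f y + 1 = (1 - y)⁻¹ := by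
    simp only [f]
    field_simp
    ring
  rw [hf_add_one, smul_eq_mul, abs_of_pos (by positivity), div_rpow hy.le hy1.le,
    inv_rpow hy1.le, ← rpow_neg hy1.le, neg_neg, ← rpow_two, ← rpow_neg hy1.le]
  have h_exp :
      (1 - y) ^ (b - 1) = (1 - y) ^ (-2 : ℝ) * (1 - y) ^ (-(a - 1)) * (1 - y) ^ (a + b) := by
    rw [← rpow_add hy1, ← rpow_add hy1]
    ring_nf
  rw [h_exp, div_eq_mul_inv, ← rpow_neg hy1.le]
  ring

theorem integral_Ioi_rpow_add_one_rpow_neg {p s : ℝ} (hp : 0 < p) (hs : p⁻¹ < s) :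
    ∫ t in Ioi 0, (t ^ p + 1) ^ (-s) = Gamma p⁻¹ * Gamma (s - p⁻¹) / (p * Gamma s) := by
  have hp' : 0 < p⁻¹ := inv_pos.2 hp
  have h_integrand : EqOn (fun x ↦ (p⁻¹ * x ^ (p⁻¹ - 1)) • ((x ^ p⁻¹) ^ p + 1) ^ (-s))
      (fun x ↦ p⁻¹ * (x ^ (p⁻¹ - 1) * (x + 1) ^ (-(p⁻¹ + (s - p⁻¹))))) (Ioi 0) := by
    intro x hx
    beta_reduce
    rw [rpow_inv_rpow (le_of_lt hx) hp.ne', add_sub_cancel, smul_eq_mul, mul_assoc]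
  rw [← integral_comp_rpow_Ioi_of_pos hp', setIntegral_congr_fun measurableSet_Ioi h_integrand,
    integral_const_mul, integral_Ioi_rpow_mul_add_one_rpow hp' (sub_pos.2 hs), add_sub_cancel]
  field_simp

theorem integral_inv_sqrt_quartic :
    (1 / Real.pi) * ∫ t in Set.Ioi (0:ℝ), 1 / Real.sqrt (t ^ 4 + 1)
      = 4 / Real.pi ^ ((3:ℝ)/2) * Real.Gamma (5 / 4) ^ 2 := by
  have h_integrand : EqOn (fun t : ℝ ↦ 1 / √(t ^ 4 + 1)) (fun t ↦ (t ^ (4:ℝ) + 1) ^ (-(1/2:ℝ)))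
      (Ioi 0) := by
    intro t _
    beta_reduce
    rw [rpow_ofNat, rpow_neg (by positivity : (0:ℝ) ≤ t ^ 4 + 1), sqrt_eq_rpow, one_div]
  have h_Gamma_quarter : Gamma 4⁻¹ = 4 * Gamma (5/4) := by
    rw [show (5/4 : ℝ) = 4⁻¹ + 1 by norm_num, Gamma_add_one (by norm_num)]
    ring
  have h_pi : π ^ ((3:ℝ)/2) = π * √π := by
    rw [show (3/2 : ℝ) = 1 + 1/2 by norm_num, rpow_add pi_pos, rpow_one, sqrt_eq_rpow]
  rw [setIntegral_congr_fun measurableSet_Ioi h_integrand,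
    integral_Ioi_rpow_add_one_rpow_neg (by norm_num) (by norm_num),
    show (1/2 : ℝ) - 4⁻¹ = 4⁻¹ by norm_num, h_Gamma_quarter, Gamma_one_half_eq, h_pi]
  field_simp
end

section
/- The function β ↦ sin β / (cos β (1 − cos β)) on the interval (0, π/2) attains its minimum at β = 2 arctan √(√5 − 2), and the minimum value is √((11 + 5√5)/2). -/
theorem min_of_sin_over_cos_one_sub_cos :
    (2 * Real.arctan (Real.sqrt (Real.sqrt 5 - 2)) ∈ Set.Ioo 0 (Real.pi / 2)) ∧
    Real.sin (2 * Real.arctan (Real.sqrt (Real.sqrt 5 - 2))) /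
        (Real.cos (2 * Real.arctan (Real.sqrt (Real.sqrt 5 - 2))) *
          (1 - Real.cos (2 * Real.arctan (Real.sqrt (Real.sqrt 5 - 2)))))
      = Real.sqrt ((11 + 5 * Real.sqrt 5) / 2) ∧
    ∀ β ∈ Set.Ioo 0 (Real.pi / 2),
      Real.sqrt ((11 + 5 * Real.sqrt 5) / 2)
        ≤ Real.sin β / (Real.cos β * (1 - Real.cos β)) := by
  have h5 : Real.sqrt 5 ^ 2 = 5 := Real.sq_sqrt (by norm_num)
  have h5nn : (0:ℝ) ≤ Real.sqrt 5 := Real.sqrt_nonneg 5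
  have h5lb : (2:ℝ) < Real.sqrt 5 := by nlinarith
  have h5ub : Real.sqrt 5 < 3 := by nlinarith
  set t := Real.sqrt (Real.sqrt 5 - 2) with ht
  have ht2 : t ^ 2 = Real.sqrt 5 - 2 := Real.sq_sqrt (by linarith)
  have htpos : 0 < t := Real.sqrt_pos.mpr (by linarith)
  have htlt1 : t < 1 := by nlinarith
  set M : ℝ := (11 + 5 * Real.sqrt 5) / 2 with hM
  have hMpos : 0 < M := by positivity
  have hne : Real.sqrt 5 - 1 ≠ 0 := by intro h; nlinarith
  have h51pos : (0:ℝ) < Real.sqrt 5 - 1 := by linarith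
  constructor
  · constructor
    · have h0 : Real.arctan 0 < Real.arctan t := Real.arctan_strictMono htpos
      rw [Real.arctan_zero] at h0
      linarith
    · have h1 : Real.arctan t < Real.arctan 1 := Real.arctan_strictMono htlt1
      rw [Real.arctan_one] at h1
      linarith
  · -- compute cos and sin at β₀
    have hca : Real.cos (Real.arctan t) = 1 / Real.sqrt (1 + t ^ 2) := Real.cos_arctan t
    have hsa : Real.sin (Real.arctan t) = t / Real.sqrt (1 + t ^ 2) := Real.sin_arctan t
    have hs1t : Real.sqrt (1 + t ^ 2) ^ 2 = 1 + t ^ 2 := Real.sq_sqrt (by positivity)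
    have hs1tpos : 0 < Real.sqrt (1 + t ^ 2) := Real.sqrt_pos.mpr (by positivity)
    have hinv : (1:ℝ) / (Real.sqrt 5 - 1) = (Real.sqrt 5 + 1) / 4 := by
      rw [div_eq_div_iff hne (by norm_num : (4:ℝ) ≠ 0)]
      linear_combination -h5
    have hcos : Real.cos (2 * Real.arctan t) = (Real.sqrt 5 - 1) / 2 := by
      rw [Real.cos_two_mul, hca]
      rw [div_pow, one_pow, hs1t, ht2]
      rw [show (1:ℝ) + (Real.sqrt 5 - 2) = Real.sqrt 5 - 1 by ring, hinv]
      ring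
    have hsin : Real.sin (2 * Real.arctan t) = 2 * t / (Real.sqrt 5 - 1) := by
      rw [Real.sin_two_mul, hsa, hca]
      rw [mul_assoc, div_mul_div_comm, mul_one, ← sq, hs1t, ht2]
      rw [show (1:ℝ) + (Real.sqrt 5 - 2) = Real.sqrt 5 - 1 by ring]
      ring
    constructor
    · rw [hcos, hsin]
      have hden : (Real.sqrt 5 - 1) / 2 * (1 - (Real.sqrt 5 - 1) / 2) = t ^ 2 := by
        rw [ht2]; linear_combination (-(1:ℝ)/4) * h5
      rw [hden]
      have hL : 2 * t / (Real.sqrt 5 - 1) / t ^ 2 = 2 / ((Real.sqrt 5 - 1) * t) := by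
        rw [div_div, sq, show (Real.sqrt 5 - 1) * (t * t) = (Real.sqrt 5 - 1) * t * t by ring,
          mul_div_mul_right _ _ htpos.ne']
      rw [hL]
      have hLpos : 0 < 2 / ((Real.sqrt 5 - 1) * t) :=
        div_pos two_pos (mul_pos h51pos htpos)
      have hsq : (2 / ((Real.sqrt 5 - 1) * t)) ^ 2 = M := by
        rw [div_pow, mul_pow, ht2, hM]
        rw [div_eq_div_iff (ne_of_gt (by nlinarith :
          (0:ℝ) < (Real.sqrt 5 - 1) ^ 2 * (Real.sqrt 5 - 2))) (by norm_num : (2:ℝ) ≠ 0)]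
        linear_combination (-(5 * Real.sqrt 5 ^ 2) + 9 * Real.sqrt 5 - 6) * h5
      rw [← hsq, Real.sqrt_sq (le_of_lt hLpos)]
    · rintro β ⟨hβ0, hβ1⟩
      have hpi := Real.pi_pos
      have hspos : 0 < Real.sin β := Real.sin_pos_of_pos_of_lt_pi hβ0 (by linarith)
      have hcpos : 0 < Real.cos β := Real.cos_pos_of_mem_Ioo ⟨by linarith, hβ1⟩
      have hclt1 : Real.cos β < 1 := by
        have := Real.cos_lt_cos_of_nonneg_of_le_pi (le_refl 0) (by linarith) hβ0
        simpa using this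
      set c := Real.cos β with hc
      set s := Real.sin β with hs
      have hpyth : s ^ 2 + c ^ 2 = 1 := Real.sin_sq_add_cos_sq β
      have hDpos : 0 < c * (1 - c) := mul_pos hcpos (by linarith)
      -- key identity and polynomial inequality
      have hid : 1 + c - M * (c ^ 2 * (1 - c))
          = M * (c - (Real.sqrt 5 - 1) / 2) ^ 2 * (c + Real.sqrt 5 - 2) := by
        rw [hM]
        linear_combination ((c * (15 * Real.sqrt 5 - 17) - 5 * Real.sqrt 5 ^ 2
          + 9 * Real.sqrt 5 - 6) / 8) * h5
      have hfac : 0 ≤ M * (c - (Real.sqrt 5 - 1) / 2) ^ 2 * (c + Real.sqrt 5 - 2) :=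
        mul_nonneg (mul_nonneg hMpos.le (sq_nonneg _)) (by linarith)
      have h1 : M * (c ^ 2 * (1 - c)) ≤ 1 + c := by linarith [hid ▸ hfac]
      have h2 : M * (c ^ 2 * (1 - c)) * (1 - c) ≤ (1 + c) * (1 - c) :=
        mul_le_mul_of_nonneg_right h1 (by linarith)
      have hkey : M * (c * (1 - c)) ^ 2 ≤ s ^ 2 := by nlinarith [h2, hpyth]
      have hfpos : 0 < s / (c * (1 - c)) := div_pos hspos hDpos
      have hMle : M ≤ (s / (c * (1 - c))) ^ 2 := by
        rw [div_pow, le_div_iff₀ (by positivity)]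
        linarith
      calc Real.sqrt M ≤ Real.sqrt ((s / (c * (1 - c))) ^ 2) := Real.sqrt_le_sqrt hMle
        _ = s / (c * (1 - c)) := Real.sqrt_sq (le_of_lt hfpos)
end
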